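/- Let t ≥ 2, let (X, A, W) be a complete convex A-metric space, let f : X → X be an A-Zamfirescu mapping with unique fixed point u, and let α_i^n ∈ [0,1] (i = 1,...,t, n ∈ ℕ) with α_1^n + ... + α_t^n = 1 and α_t^n ≥ α > 0 for all n. Let {y_n} be any sequence in X and set ε_n = A(y_{n+1}, ..., y_{n+1}, W(y_n, y_n, ..., y_n, f y_n; α_1^n, ..., α_t^n)). If ε_n → 0 as n → ∞, then y_n converges to u, i.e., A(y_n, ..., y_n, u) → 0. -/

import Mathlib

open Filter

/-- The tuple `(x, x, ..., x, y)` with `x` in the first `t-1` slots and `y` in the last. -/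
def avec {X : Type*} (t : ℕ) (x y : X) : Fin t → X :=
  fun j => if (j : ℕ) < t - 1 then x else y

/-- `A` is an A-metric on `X` (with `t` arguments). -/
def IsAMetric {X : Type*} (t : ℕ) (A : (Fin t → X) → ℝ) : Prop :=
  (∀ x : Fin t → X, 0 ≤ A x) ∧
  (∀ x : Fin t → X, A x = 0 ↔ ∀ i j, x i = x j) ∧
  (∀ (x : Fin t → X) (y : X), A x ≤ ∑ i, A (avec t (x i) y))

/-- `f` is an A-Zamfirescu mapping with respect to the A-metric `A`. -/
def IsAZ {X : Type*} (t : ℕ) (A : (Fin t → X) → ℝ) (f : X → X) : Prop :=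
  ∃ a b c : ℝ, 0 ≤ a ∧ a < 1 ∧ 0 ≤ b ∧ b < 1 / (t : ℝ) ∧ 0 ≤ c ∧ c < 1 / (t : ℝ) ∧
    ∀ x y : X,
      A (avec t (f x) (f y)) ≤ a * A (avec t x y) ∨
      A (avec t (f x) (f y)) ≤ b * (A (avec t (f x) x) + A (avec t (f y) y)) ∨
      A (avec t (f x) (f y)) ≤ c * (A (avec t (f x) y) + A (avec t (f y) x))

/-- `W` is a convex structure on the A-metric space `(X, A)`. -/
def IsConvexStructure {X : Type*} (t : ℕ) (A : (Fin t → X) → ℝ)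
    (W : (Fin t → X) → (Fin t → ℝ) → X) : Prop :=
  ∀ (u : Fin t → X) (xs : Fin t → X) (a : Fin t → ℝ),
    (∀ i, a i ∈ Set.Icc (0 : ℝ) 1) → (∑ i, a i = 1) →
    A (fun j => if (j : ℕ) < t - 1 then u j else W xs a) ≤
      ∑ i, a i * A (fun j => if (j : ℕ) < t - 1 then u j else xs i)

/-- The A-metric space `(X, A)` is complete: every Cauchy sequence converges. -/
def IsCompleteA {X : Type*} (t : ℕ) (A : (Fin t → X) → ℝ) : Prop :=
  ∀ x : ℕ → X,
    (∀ ε : ℝ, 0 < ε → ∃ N, ∀ n ≥ N, ∀ m ≥ N, A (avec t (x n) (x m)) < ε) →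
    ∃ u : X, Tendsto (fun n => A (avec t (x n) u)) atTop (nhds 0)

/-! At the fixed point `u`, each of the three Zamfirescu alternatives (after the triangle
inequality and symmetry of `A`) yields a contraction `A(u,…,u,fz) ≤ δ A(u,…,u,z)` with `δ < 1`.
Convexity of `W` and `α_t^n ≥ α` then give
`A(y_{n+1},…,y_{n+1},u) ≤ (1 - α(1-δ)) A(y_n,…,y_n,u) + (t-1) ε_n`,
and a linear recursion with contraction factor `< 1` and vanishing perturbation tends to `0`. -/

open Finset

theorem le_div_mul_of_le_mul_add {D d p r : ℝ} (hp : p < 1) (h : D ≤ p * D + r * d) :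
    D ≤ r / (1 - p) * d := by
  rw [div_mul_eq_mul_div, le_div_iff₀ (by linarith)]
  linarith

theorem tendsto_zero_of_le_mul_add {q : ℝ} (hq0 : 0 ≤ q) (hq1 : q < 1) {d c : ℕ → ℝ}
    (hd : ∀ n, 0 ≤ d n) (hrec : ∀ n, d (n + 1) ≤ q * d n + c n)
    (hc : Tendsto c atTop (nhds 0)) : Tendsto d atTop (nhds 0) := by
  refine tendsto_order.2 ⟨fun b hb => Eventually.of_forall fun n => hb.trans_le (hd n),
    fun η hη => ?_⟩
  obtain ⟨N, hN⟩ := eventually_atTop.1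
    (hc.eventually (ge_mem_nhds (by nlinarith : (0 : ℝ) < (1 - q) * (η / 2))))
  -- once `c ≤ (1 - q) η/2`, the excess `d - η/2` shrinks by the factor `q` at each step
  have hgeom (k : ℕ) : d (N + k) - η / 2 ≤ q ^ k * (d N - η / 2) :=
    le_geom (u := fun k => d (N + k) - η / 2) hq0 k fun j _ => by
      have := hrec (N + j)
      have := hN (N + j) (by omega)
      simp only [← add_assoc]
      linarith
  have hpow : Tendsto (fun k => q ^ k * (d N - η / 2)) atTop (nhds 0) := by
    simpa using (tendsto_pow_atTop_nhds_zero_of_lt_one hq0 hq1).mul_const (d N - η / 2)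
  obtain ⟨K, hK⟩ := eventually_atTop.1 (hpow.eventually (gt_mem_nhds (half_pos hη)))
  refine eventually_atTop.2 ⟨N + K, fun n hn => ?_⟩
  obtain ⟨k, rfl⟩ := Nat.exists_eq_add_of_le (le_of_add_le_left hn)
  linarith [hgeom k, hK k (by omega)]

section AMetric

variable {X : Type*} {t : ℕ} {A : (Fin t → X) → ℝ}

theorem avec_of_ne {x y : X} {i : Fin t} (hi : (i : ℕ) ≠ t - 1) : avec t x y i = x :=
  if_pos (by have := i.isLt; omega)

theorem avec_last (ht : 0 < t) (x y : X) : avec t x y ⟨t - 1, Nat.sub_lt ht one_pos⟩ = y :=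
  if_neg (lt_irrefl _)

theorem sum_avec (ht : 0 < t) (F : Fin t → X → ℝ) (x y : X) :
    ∑ i, F i (avec t x y i) =
      ∑ i ∈ univ.erase ⟨t - 1, Nat.sub_lt ht one_pos⟩, F i x +
        F ⟨t - 1, Nat.sub_lt ht one_pos⟩ y := by
  rw [← sum_erase_add _ _ (mem_univ ⟨t - 1, Nat.sub_lt ht one_pos⟩), avec_last ht]
  congr 1
  refine sum_congr rfl fun i hi => ?_
  rw [avec_of_ne fun h => ne_of_mem_erase hi (Fin.ext h)]

theorem IsAMetric.avec_self (hA : IsAMetric t A) (x : X) : A (avec t x x) = 0 :=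
  (hA.2.1 _).2 fun i j => by simp [avec]

theorem IsAMetric.avec_triangle (hA : IsAMetric t A) (ht : 0 < t) (x y z : X) :
    A (avec t x y) ≤ ((t : ℝ) - 1) * A (avec t x z) + A (avec t y z) := by
  calc A (avec t x y) ≤ ∑ i, A (avec t (avec t x y i) z) := hA.2.2 _ z
    _ = _ := sum_avec ht (fun _ w => A (avec t w z)) x y
    _ = ((t : ℝ) - 1) * A (avec t x z) + A (avec t y z) := by
      rw [sum_const, card_erase_of_mem (mem_univ _), card_univ, Fintype.card_fin, nsmul_eq_mul,
        Nat.cast_sub ht, Nat.cast_one]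

theorem IsAMetric.avec_comm (hA : IsAMetric t A) (ht : 0 < t) (x y : X) :
    A (avec t x y) = A (avec t y x) := by
  have key (p q : X) : A (avec t p q) ≤ A (avec t q p) := by
    simpa [hA.avec_self] using hA.avec_triangle ht p q p
  exact (key x y).antisymm (key y x)

theorem IsAZ.exists_contraction_at_fixedPoint (hA : IsAMetric t A) (ht : 2 ≤ t) {f : X → X}
    (hf : IsAZ t A f) {u : X} (hu : f u = u) :
    ∃ δ : ℝ, 0 ≤ δ ∧ δ < 1 ∧ ∀ z, A (avec t u (f z)) ≤ δ * A (avec t u z) := by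
  obtain ⟨a, b, c, ha0, ha1, hb0, hb1, hc0, hc1, hZ⟩ := hf
  have ht0 : 0 < t := by omega
  have htR : (2 : ℝ) ≤ t := by exact_mod_cast ht
  have hbt : b * t < 1 := (lt_div_iff₀ (by linarith)).1 hb1
  have hct : c * t < 1 := (lt_div_iff₀ (by linarith)).1 hc1
  set δ := max a (max (b / (1 - b * ((t : ℝ) - 1))) (c / (1 - c)))
  refine ⟨δ, le_max_of_le_left ha0, max_lt ha1 (max_lt ?_ ?_), fun z => ?_⟩
  · rw [div_lt_one (by nlinarith)]; nlinarith
  · rw [div_lt_one (by nlinarith)]; nlinarith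
  have hd := hA.1 (avec t u z)
  have hcomm := hA.avec_comm ht0 (f z) u
  rcases hZ u z with h | h | h <;> rw [hu] at h
  · exact h.trans (by gcongr; exact le_max_left _ _)
  · have hfz : A (avec t (f z) z) ≤ ((t : ℝ) - 1) * A (avec t u (f z)) + A (avec t u z) := by
      rw [← hcomm, ← hA.avec_comm ht0 z u]
      exact hA.avec_triangle ht0 (f z) z u
    rw [hA.avec_self, zero_add] at h
    calc A (avec t u (f z)) ≤ b / (1 - b * ((t : ℝ) - 1)) * A (avec t u z) :=
          le_div_mul_of_le_mul_add (by nlinarith) (by nlinarith)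
      _ ≤ δ * A (avec t u z) := by gcongr; exact le_max_of_le_right (le_max_left _ _)
  · rw [hcomm] at h
    calc A (avec t u (f z)) ≤ c / (1 - c) * A (avec t u z) :=
          le_div_mul_of_le_mul_add (by nlinarith) (by linarith)
      _ ≤ δ * A (avec t u z) := by gcongr; exact le_max_of_le_right (le_max_right _ _)

variable {W : (Fin t → X) → (Fin t → ℝ) → X}

theorem IsConvexStructure.avec_le_of_convex (hW : IsConvexStructure t A W) (ht : 0 < t)
    {α : Fin t → ℝ} (hα : ∀ i, α i ∈ Set.Icc (0 : ℝ) 1) (hαsum : ∑ i, α i = 1) (u x y : X) :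
    A (avec t u (W (avec t x y) α)) ≤
      (1 - α ⟨t - 1, Nat.sub_lt ht one_pos⟩) * A (avec t u x) +
        α ⟨t - 1, Nat.sub_lt ht one_pos⟩ * A (avec t u y) := by
  have hrest : ∑ i ∈ univ.erase ⟨t - 1, Nat.sub_lt ht one_pos⟩, α i =
      1 - α ⟨t - 1, Nat.sub_lt ht one_pos⟩ :=
    eq_sub_of_add_eq (hαsum ▸ sum_erase_add _ _ (mem_univ _))
  calc A (avec t u (W (avec t x y) α)) ≤ ∑ i, α i * A (avec t u (avec t x y i)) :=
        hW (fun _ => u) _ α hα hαsum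
    _ = _ := sum_avec ht (fun i w => α i * A (avec t u w)) x y
    _ = _ := by rw [← sum_mul, hrest]

theorem avec_mann_step_le (hA : IsAMetric t A) (hW : IsConvexStructure t A W) (ht : 0 < t)
    {f : X → X} {u : X} {δ : ℝ} (hδ1 : δ ≤ 1)
    (hδ : ∀ z, A (avec t u (f z)) ≤ δ * A (avec t u z))
    {α : Fin t → ℝ} (hα : ∀ i, α i ∈ Set.Icc (0 : ℝ) 1) (hαsum : ∑ i, α i = 1)
    {a : ℝ} (ha : a ≤ α ⟨t - 1, Nat.sub_lt ht one_pos⟩) (x : X) :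
    A (avec t u (W (avec t x (f x)) α)) ≤ (1 - a * (1 - δ)) * A (avec t u x) := by
  set αt := α ⟨t - 1, Nat.sub_lt ht one_pos⟩
  have hαt := hα ⟨t - 1, Nat.sub_lt ht one_pos⟩
  have hx := hA.1 (avec t u x)
  calc A (avec t u (W (avec t x (f x)) α))
        ≤ (1 - αt) * A (avec t u x) + αt * A (avec t u (f x)) :=
          hW.avec_le_of_convex ht hα hαsum u x (f x)
    _ ≤ (1 - αt) * A (avec t u x) + αt * (δ * A (avec t u x)) := by
          gcongr; exacts [hαt.1, hδ x]
    _ = (1 - αt * (1 - δ)) * A (avec t u x) := by ring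
    _ ≤ (1 - a * (1 - δ)) * A (avec t u x) := by gcongr

end AMetric

/-- Stability of the Mann iteration process (forward direction): if the
approximate-iteration errors tend to zero, the sequence converges to the
unique fixed point. -/
theorem mann_stability_forward
    {X : Type*} (t : ℕ) (ht : 2 ≤ t)
    (A : (Fin t → X) → ℝ) (hA : IsAMetric t A)
    (W : (Fin t → X) → (Fin t → ℝ) → X) (hW : IsConvexStructure t A W)
    (f : X → X) (hf : IsAZ t A f)
    (u : X) (hu : f u = u)
    (α : ℕ → Fin t → ℝ)
    (hα : ∀ n i, α n i ∈ Set.Icc (0 : ℝ) 1)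
    (hαsum : ∀ n, ∑ i, α n i = 1)
    (a : ℝ) (ha : 0 < a) (hlb : ∀ n, a ≤ α n ⟨t - 1, by omega⟩)
    (y : ℕ → X) (ε : ℕ → ℝ)
    (hε : ∀ n, ε n = A (avec t (y (n + 1)) (W (avec t (y n) (f (y n))) (α n))))
    (hε0 : Tendsto ε atTop (nhds 0)) :
    Tendsto (fun n => A (avec t (y n) u)) atTop (nhds 0) := by
  obtain ⟨δ, hδ0, hδ1, hδ⟩ := hf.exists_contraction_at_fixedPoint hA ht hu
  have ht0 : 0 < t := by omega
  have ha1 : a ≤ 1 := (hlb 0).trans (hα 0 _).2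
  refine tendsto_zero_of_le_mul_add (q := 1 - a * (1 - δ)) (c := fun n => ((t : ℝ) - 1) * ε n)
    (by nlinarith) (by nlinarith) (fun n => hA.1 _) (fun n => ?_)
    (by simpa using hε0.const_mul ((t : ℝ) - 1))
  have hstep := avec_mann_step_le hA hW ht0 hδ1.le hδ (hα n) (hαsum n) (hlb n) (y n)
  rw [hA.avec_comm ht0 u (y n)] at hstep
  rw [hε n]
  linarith [hA.avec_triangle ht0 (y (n + 1)) u (W (avec t (y n) (f (y n))) (α n))]
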